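/- arXiv:math/0701254 — 5 statements merged into one kernel-verified Lean document; each statement's English description precedes it below -/
import Mathlib

section
/- Let s be a finite-dimensional semisimple Lie algebra over a field of characteristic zero equipped with a ℤ-grading supported in [−k, k] where k ≥ 1, i.e. a family of subspaces (s_i)_{i∈ℤ} whose internal direct sum is s, with [s_i, s_j] ⊆ s_{i+j} for all i, j and s_i = {0} whenever |i| > k. If x ∈ s_k satisfies [x, y] ∈ s_k for all y ∈ s, then x = 0. -/
/-- Let `s` be a finite-dimensional semisimple Lie algebra over a field of characteristic
zero, equipped with a `ℤ`-grading `(sI i)` supported in `[-k, k]` with `k ≥ 1`: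
the subspaces `sI i` form an internal direct sum decomposition of `s`,
`[sI i, sI j] ⊆ sI (i + j)` and `sI i = 0` for `|i| > k`.
If `x ∈ sI k` satisfies `[x, y] ∈ sI k` for all `y ∈ s`, then `x = 0`. -/
theorem top_graded_piece_no_invariant
    {F : Type*} [Field F] [CharZero F] {s : Type*} [LieRing s] [LieAlgebra F s]
    [FiniteDimensional F s] [LieAlgebra.IsSemisimple F s]
    (k : ℤ) (hk : 1 ≤ k) (sI : ℤ → Submodule F s)
    (hinternal : DirectSum.IsInternal sI)
    (hbr : ∀ i j : ℤ, ∀ x ∈ sI i, ∀ y ∈ sI j, ⁅x, y⁆ ∈ sI (i + j))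
    (hsupp : ∀ i : ℤ, k < |i| → sI i = ⊥)
    (x : s) (hx : x ∈ sI k) (hxy : ∀ y : s, ⁅x, y⁆ ∈ sI k) :
    x = 0 := by
  -- distinct graded pieces intersect trivially
  have hdisj : ∀ i j : ℤ, i ≠ j → ∀ z : s, z ∈ sI i → z ∈ sI j → z = 0 := by
    intro i j hij z hzi hzj
    have := hinternal.submodule_iSupIndep.pairwiseDisjoint hij
    exact (Submodule.disjoint_def.mp this) z hzi hzj
  -- the set of elements of `sI k` whose bracket with everything lands in `sI k`
  -- is a Lie ideal
  set Tcar : Set s := {z | z ∈ sI k ∧ ∀ y : s, ⁅z, y⁆ ∈ sI k} with hTcar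
  have key : ∀ u : s, ∀ z ∈ Tcar, ⁅u, z⁆ ∈ Tcar := by
    intro u z hz
    have hzk : z ∈ sI k := hz.1
    have hzy : ∀ y : s, ⁅z, y⁆ ∈ sI k := hz.2
    have hu : u ∈ ⨆ i, sI i := by
      rw [hinternal.submodule_iSup_eq_top]; trivial
    refine Submodule.iSup_induction (motive := fun u => ⁅u, z⁆ ∈ Tcar) sI hu ?_ ?_ ?_
    · intro i u hui
      by_cases hi : i = 0
      · subst hi
        constructor
        · have : ⁅z, u⁆ ∈ sI k := hzy u
          have h2 : ⁅u, z⁆ = -⁅z, u⁆ := by rw [← lie_skew]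
          rw [h2]; exact neg_mem this
        · intro y
          have hleib : ⁅⁅u, z⁆, y⁆ = ⁅u, ⁅z, y⁆⁆ - ⁅z, ⁅u, y⁆⁆ := lie_lie u z y
          rw [hleib]
          have h1 : ⁅u, ⁅z, y⁆⁆ ∈ sI (0 + k) := hbr 0 k u hui _ (hzy y)
          rw [zero_add] at h1
          exact sub_mem h1 (hzy _)
      · have h1 : ⁅u, z⁆ ∈ sI (i + k) := hbr i k u hui z hzk
        have h2 : ⁅u, z⁆ = -⁅z, u⁆ := by rw [← lie_skew]
        have h3 : ⁅u, z⁆ ∈ sI k := by rw [h2]; exact neg_mem (hzy u)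
        have h4 : ⁅u, z⁆ = 0 := hdisj (i + k) k (by omega) _ h1 h3
        rw [h4]
        exact ⟨zero_mem _, fun y => by rw [zero_lie]; exact zero_mem _⟩
    · show ⁅(0 : s), z⁆ ∈ Tcar
      rw [zero_lie]
      exact ⟨zero_mem _, fun y => by rw [zero_lie]; exact zero_mem _⟩
    · intro a b ha hb
      have : ⁅a + b, z⁆ = ⁅a, z⁆ + ⁅b, z⁆ := add_lie a b z
      rw [hTcar] at ha hb ⊢
      refine ⟨by rw [this]; exact add_mem ha.1 hb.1, fun y => ?_⟩
      have h2 : ⁅⁅a + b, z⁆, y⁆ = ⁅⁅a, z⁆, y⁆ + ⁅⁅b, z⁆, y⁆ := by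
        rw [this, add_lie]
      rw [h2]
      exact add_mem (ha.2 y) (hb.2 y)
  let T : LieIdeal F s :=
    { carrier := Tcar
      add_mem' := fun ha hb => ⟨add_mem ha.1 hb.1,
        fun y => by rw [add_lie]; exact add_mem (ha.2 y) (hb.2 y)⟩
      zero_mem' := ⟨zero_mem _, fun y => by rw [zero_lie]; exact zero_mem _⟩
      smul_mem' := fun c z hz => ⟨Submodule.smul_mem _ c hz.1,
        fun y => by rw [smul_lie]; exact Submodule.smul_mem _ c (hz.2 y)⟩
      lie_mem := fun {u z} hz => key u z hz }
  -- `T` is abelian since `⁅sI k, sI k⁆ ⊆ sI (2k) = ⊥`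
  have habel : IsLieAbelian T := by
    constructor
    intro a b
    have h1 : ⁅(a : s), (b : s)⁆ ∈ sI (k + k) := hbr k k _ a.2.1 _ b.2.1
    have h2 : sI (k + k) = ⊥ := hsupp (k + k) (by rw [abs_of_pos (by omega)]; omega)
    rw [h2, Submodule.mem_bot] at h1
    ext
    simpa using h1
  -- semisimple Lie algebras have no nonzero abelian ideals
  have hT : T = ⊥ := by
    have : LieAlgebra.HasTrivialRadical F s := inferInstance
    exact ((LieAlgebra.hasTrivialRadical_iff_no_abelian_ideals F s).mp this) T habel
  have hxT : x ∈ T := ⟨hx, hxy⟩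
  rw [hT] at hxT
  exact (LieSubmodule.mem_bot _).mp hxT
end

section
/- Fix n ≥ 2 and let p ⊆ sl(n, ℂ) be the Borel subalgebra of trace-zero upper triangular matrices. Then {x ∈ p : [x, y] ∈ p for all y ∈ sl(n, ℂ)} = ℂ·E_{1n} (the span of the matrix with 1 in entry (1, n) and 0 elsewhere), and {x ∈ ℂ·E_{1n} : [x, y] ∈ ℂ·E_{1n} for all y ∈ sl(n, ℂ)} = {0}. Consequently the descending filtration of the pair (sl(n, ℂ), p) is {0} ⊂ ℂ·E_{1n} ⊂ p ⊂ sl(n, ℂ). -/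
/-- The Borel subalgebra `p` of trace-zero upper triangular matrices, as a subspace. -/
def borelSl (n : ℕ) (F : Type*) [Field F] : Submodule F (Matrix (Fin n) (Fin n) F) where
  carrier := {A | Matrix.trace A = 0 ∧ ∀ c d : Fin n, (d : ℕ) < (c : ℕ) → A c d = 0}
  add_mem' := fun {A B} hA hB => ⟨by simp [Matrix.trace_add, hA.1, hB.1],
    fun c d h => by simp [Matrix.add_apply, hA.2 c d h, hB.2 c d h]⟩
  zero_mem' := ⟨by simp, fun c d _ => rfl⟩
  smul_mem' := fun t {A} hA => ⟨by simp [Matrix.trace_smul, hA.1],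
    fun c d h => by simp [Matrix.smul_apply, hA.2 c d h]⟩

/-- The matrix `E_{1n}` with a single `1` in entry `(1, n)` (in `1`-based indexing). -/
def Etop (n : ℕ) (F : Type*) [Field F] : Matrix (Fin n) (Fin n) F :=
  fun c d => if (c : ℕ) = 0 ∧ (d : ℕ) = n - 1 then 1 else 0

noncomputable def Em {n : ℕ} (i j : Fin n) : Matrix (Fin n) (Fin n) ℂ :=
  fun a b => if a = i ∧ b = j then 1 else 0

lemma mem_sl_iff {n : ℕ} (y : Matrix (Fin n) (Fin n) ℂ) :
    y ∈ LieAlgebra.SpecialLinear.sl (Fin n) ℂ ↔ Matrix.trace y = 0 := Iff.rfl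

lemma Em_trace {n : ℕ} (i j : Fin n) (h : i ≠ j) : Matrix.trace (Em i j) = 0 := by
  unfold Matrix.trace Em Matrix.diag
  apply Finset.sum_eq_zero
  intro a _
  simp only
  rw [if_neg]
  rintro ⟨rfl, rfl⟩; exact h rfl

lemma mulEm {n : ℕ} (x : Matrix (Fin n) (Fin n) ℂ) (i j a b : Fin n) :
    (x * Em i j) a b = if b = j then x a i else 0 := by
  simp only [Matrix.mul_apply, Em, mul_ite, mul_one, mul_zero]
  by_cases hb : b = j
  · subst hb
    simp only [and_true]
    rw [Finset.sum_ite_eq' Finset.univ i (fun k => x a k)]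
    simp
  · rw [if_neg hb]
    apply Finset.sum_eq_zero
    intro k _
    rw [if_neg (fun h => hb h.2)]

lemma Em_mul {n : ℕ} (x : Matrix (Fin n) (Fin n) ℂ) (i j a b : Fin n) :
    (Em i j * x) a b = if a = i then x j b else 0 := by
  simp only [Matrix.mul_apply, Em, ite_mul, one_mul, zero_mul]
  by_cases ha : a = i
  · subst ha
    simp only [true_and]
    rw [Finset.sum_ite_eq' Finset.univ j (fun k => x k b)]
    simp
  · rw [if_neg ha]
    apply Finset.sum_eq_zero
    intro k _
    rw [if_neg (fun h => ha h.1)]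

/-- For `n ≥ 2` and the Borel subalgebra `p ⊆ sl(n, ℂ)` of trace-zero upper triangular
matrices: `{x ∈ p : [x, y] ∈ p for all y ∈ sl(n, ℂ)} = ℂ • E_{1n}`, and
`{x ∈ ℂ • E_{1n} : [x, y] ∈ ℂ • E_{1n} for all y ∈ sl(n, ℂ)} = {0}`.  Consequently the
descending filtration of the pair `(sl(n, ℂ), p)` is `{0} ⊂ ℂ • E_{1n} ⊂ p ⊂ sl(n, ℂ)`. -/
theorem borel_filtration (n : ℕ) (hn : 2 ≤ n) :
    (∀ x : Matrix (Fin n) (Fin n) ℂ,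
      (x ∈ borelSl n ℂ ∧ ∀ y : Matrix (Fin n) (Fin n) ℂ,
          y ∈ LieAlgebra.SpecialLinear.sl (Fin n) ℂ → ⁅x, y⁆ ∈ borelSl n ℂ) ↔
        x ∈ Submodule.span ℂ {Etop n ℂ}) ∧
    (∀ x : Matrix (Fin n) (Fin n) ℂ,
      (x ∈ Submodule.span ℂ {Etop n ℂ} ∧ ∀ y : Matrix (Fin n) (Fin n) ℂ,
          y ∈ LieAlgebra.SpecialLinear.sl (Fin n) ℂ → ⁅x, y⁆ ∈ Submodule.span ℂ {Etop n ℂ}) ↔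
        x = 0) := by
  haveI : NeZero n := ⟨by omega⟩
  set last : Fin n := ⟨n - 1, by omega⟩ with hlastdef
  have hlastval : (last : ℕ) = n - 1 := rfl
  have h0val : ((0 : Fin n) : ℕ) = 0 := Fin.val_zero n
  have hE : Etop n ℂ = Em (0 : Fin n) last := by
    funext a b
    simp only [Etop, Em]
    apply if_congr _ rfl rfl
    constructor
    · rintro ⟨h1, h2⟩; exact ⟨Fin.ext (by omega), Fin.ext (by omega)⟩
    · rintro ⟨rfl, rfl⟩; exact ⟨rfl, rfl⟩
  have hl0 : last ≠ (0 : Fin n) := by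
    intro h
    have := congrArg Fin.val h
    omega
  constructor
  · intro x
    constructor
    · rintro ⟨⟨htr, hlow⟩, hy⟩
      have key : ∀ c d a b : Fin n, c ≠ d → (b : ℕ) < (a : ℕ) →
          (if b = d then x a c else 0) = (if a = c then x d b else 0) := by
        intro c d a b hcd hba
        have h1 := (hy (Em c d) ((mem_sl_iff _).2 (Em_trace c d hcd))).2 a b hba
        rw [Ring.lie_def, Matrix.sub_apply, mulEm, Em_mul, sub_eq_zero] at h1
        exact h1
      have hdiag : ∀ a : Fin n, x a a = x 0 0 := by
        intro a
        by_cases ha : a = 0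
        · rw [ha]
        · have hpos : 0 < (a : ℕ) := by
            have : (a : ℕ) ≠ 0 := fun h => ha (Fin.ext (by omega))
            omega
          have h := key a 0 a 0 ha hpos
          simpa using h
      have hd0 : x 0 0 = 0 := by
        have : Matrix.trace x = (n : ℂ) * x 0 0 := by
          unfold Matrix.trace Matrix.diag
          rw [Finset.sum_congr rfl (fun a _ => hdiag a), Finset.sum_const,
            Finset.card_univ, Fintype.card_fin, nsmul_eq_mul]
        rw [htr] at this
        have hne : (n : ℂ) ≠ 0 := by
          simp only [ne_eq, Nat.cast_eq_zero]
          omega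
        rcases mul_eq_zero.1 this.symm with h | h
        · exact absurd h hne
        · exact h
      have hzero : ∀ a b : Fin n, ¬((a : ℕ) = 0 ∧ (b : ℕ) = n - 1) → x a b = 0 := by
        intro a b hne
        rcases lt_trichotomy (a : ℕ) (b : ℕ) with hab | hab | hab
        · by_cases hb : (b : ℕ) = n - 1
          · have hane : (a : ℕ) ≠ 0 := fun h => hne ⟨h, hb⟩
            have hcd : b ≠ (0 : Fin n) := by
              intro h; have := congrArg Fin.val h; omega
            have h := key b 0 a 0 hcd (by omega)
            have hab' : a ≠ b := by
              intro h'; rw [h'] at hab; omega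
            simpa [hab'] using h
          · have hblt : (b : ℕ) + 1 < n := by
              have := b.isLt; omega
            set a' : Fin n := ⟨(b : ℕ) + 1, hblt⟩ with ha'
            have hcd : a' ≠ a := by
              intro h; have := congrArg Fin.val h
              simp only [ha'] at this; omega
            have h := key a' a a' b hcd (by simp [ha'])
            have hba' : b ≠ a := by
              intro h'; rw [h'] at hab; omega
            simpa [hba'] using h.symm
        · have : a = b := Fin.ext hab
          subst this
          rw [hdiag, hd0]
        · exact hlow a b hab
      rw [Submodule.mem_span_singleton]
      refine ⟨x 0 last, ?_⟩
      funext a b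
      rw [Matrix.smul_apply, smul_eq_mul]
      by_cases h : (a : ℕ) = 0 ∧ (b : ℕ) = n - 1
      · rw [show Etop n ℂ a b = 1 from if_pos h, mul_one]
        have ha : a = 0 := Fin.ext (by omega)
        have hb : b = last := Fin.ext (by omega)
        rw [ha, hb]
      · rw [show Etop n ℂ a b = 0 from if_neg h, mul_zero, hzero a b h]
    · intro hx
      rw [Submodule.mem_span_singleton] at hx
      obtain ⟨t, rfl⟩ := hx
      refine ⟨⟨?_, ?_⟩, ?_⟩
      · rw [Matrix.trace_smul, hE, Em_trace _ _ (Ne.symm hl0), smul_zero]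
      · intro c d h
        rw [Matrix.smul_apply,
          show Etop n ℂ c d = 0 from if_neg (by omega), smul_zero]
      · intro y _
        refine ⟨?_, ?_⟩
        · rw [Ring.lie_def, Matrix.trace_sub, Matrix.trace_mul_comm, sub_self]
        · intro c d h
          rw [Ring.lie_def, Matrix.sub_apply, hE, Matrix.smul_mul, Matrix.mul_smul,
            Matrix.smul_apply, Matrix.smul_apply, mulEm, Em_mul]
          have hc0 : c ≠ (0 : Fin n) := by
            intro h'; have := congrArg Fin.val h'; omega
          have hdl : d ≠ last := by
            intro h'; have := congrArg Fin.val h'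
            have := c.isLt; omega
          rw [if_neg hc0, if_neg hdl]
          simp
  · intro x
    constructor
    · rintro ⟨hx, hy⟩
      rw [Submodule.mem_span_singleton] at hx
      obtain ⟨t, rfl⟩ := hx
      have hytr : Em last (0 : Fin n) ∈ LieAlgebra.SpecialLinear.sl (Fin n) ℂ :=
        (mem_sl_iff _).2 (Em_trace last 0 hl0)
      have h := hy (Em last 0) hytr
      rw [Submodule.mem_span_singleton] at h
      obtain ⟨s, hs⟩ := h
      have h00 := congr_fun (congr_fun hs 0) 0
      rw [Ring.lie_def, hE, Matrix.sub_apply, Matrix.smul_mul, Matrix.mul_smul,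
        Matrix.smul_apply, Matrix.smul_apply, Matrix.smul_apply, Em_mul, Em_mul] at h00
      rw [if_pos rfl, if_neg (Ne.symm hl0)] at h00
      rw [show Em (0 : Fin n) last (0 : Fin n) (0 : Fin n) = 0 from
        if_neg (by rintro ⟨-, h'⟩; exact hl0 h'.symm)] at h00
      rw [show Em last (0 : Fin n) last (0 : Fin n) = 1 from if_pos ⟨rfl, rfl⟩] at h00
      simp only [smul_zero, smul_eq_mul, mul_one, mul_zero, sub_zero] at h00
      rw [hE, show t = 0 from h00.symm, zero_smul]
    · rintro rfl
      exact ⟨Submodule.zero_mem _, fun y _ => by rw [Ring.lie_def, zero_mul, mul_zero, sub_zero]; exact Submodule.zero_mem _⟩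
end

section
/- Let g be a Lie algebra over a field F, g₀ ⊆ g a Lie subalgebra, with descending filtration g_0 := g₀, g_{k+1} := {x ∈ g_k : [x, y] ∈ g_k for all y ∈ g}. Let V := g/g₀ be the quotient vector space with projection π : g → V, and let ad₀ : g₀ → End(V) be given by ad₀(z)(π(y)) = π([z, y]). Fix k ≥ 0 and x ∈ g_k. Then: (i) the assignment (y_1, …, y_{k+1}) ↦ π([⋯[[x, y_1], y_2]⋯, y_{k+1}]) descends to a well-defined (k+1)-multilinear map T_x : V^{k+1} → V (its value is unchanged when any argument y_i is altered by an element of g₀); (ii) T_x is symmetric under all permutations of its arguments; (iii) for any fixed v_1, …, v_k ∈ V, the linear map v ↦ T_x(v_1, …, v_k, v) lies in the image ad₀(g₀) ⊆ End(V); and (iv) T_x = 0 if and only if x ∈ g_{k+1}. -/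
variable {F : Type*} [Field F] {g : Type*} [LieRing g] [LieAlgebra F g]

/-- The descending filtration of a pair `(g, g₀)`:
`g_0 = g₀` and `g_{k+1} = {x ∈ g_k : [x, y] ∈ g_k for all y ∈ g}`. -/
def filt (g₀ : Submodule F g) : ℕ → Submodule F g
  | 0 => g₀
  | k + 1 =>
    { carrier := {x | x ∈ filt g₀ k ∧ ∀ y : g, ⁅x, y⁆ ∈ filt g₀ k}
      add_mem' := fun {a b} ha hb => ⟨(filt g₀ k).add_mem ha.1 hb.1,
        fun y => by rw [add_lie]; exact (filt g₀ k).add_mem (ha.2 y) (hb.2 y)⟩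
      zero_mem' := ⟨(filt g₀ k).zero_mem,
        fun y => by rw [zero_lie]; exact (filt g₀ k).zero_mem⟩
      smul_mem' := fun c {x} hx => ⟨(filt g₀ k).smul_mem c hx.1,
        fun y => by rw [smul_lie]; exact (filt g₀ k).smul_mem c (hx.2 y)⟩ }

/-- Bracketing on the left with `x`, as a linear map. -/
def brk (x : g) : g →ₗ[F] g where
  toFun y := ⁅x, y⁆
  map_add' := lie_add x
  map_smul' c y := lie_smul c x y

/-- The map `ad₀ : g₀ → End (g/g₀)`, `ad₀(z)(y mod g₀) = [z, y] mod g₀`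
(well defined since `[g₀, g₀] ⊆ g₀`). -/
def ad0 (g₀ : LieSubalgebra F g) (z : g₀) :
    (g ⧸ g₀.toSubmodule) →ₗ[F] (g ⧸ g₀.toSubmodule) :=
  Submodule.mapQ _ _ (brk (z : g)) (fun y hy => g₀.lie_mem z.2 hy)

/-- The iterated bracket `[⋯[[x, y 0], y 1]⋯, y m]`. -/
def iterBrk {m : ℕ} (x : g) (y : Fin m → g) : g :=
  (List.ofFn y).foldl (fun a b => ⁅a, b⁆) x

lemma mem_filt_succ {g₀ : Submodule F g} {k : ℕ} {x : g} :
    x ∈ filt g₀ (k + 1) ↔ x ∈ filt g₀ k ∧ ∀ y : g, ⁅x, y⁆ ∈ filt g₀ k := Iff.rfl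

lemma iterBrk_zero (x : g) (y : Fin 0 → g) : iterBrk x y = x := by
  simp [iterBrk]

lemma iterBrk_cons {m : ℕ} (x a : g) (y : Fin m → g) :
    iterBrk x (Fin.cons a y) = iterBrk ⁅x, a⁆ y := by
  simp [iterBrk, List.ofFn_succ]

lemma iterBrk_tail {m : ℕ} (x : g) (y : Fin (m + 1) → g) :
    iterBrk x y = iterBrk ⁅x, y 0⁆ (Fin.tail y) := by
  rw [← iterBrk_cons, Fin.cons_self_tail]

lemma iterBrk_snoc {m : ℕ} (x b : g) (y : Fin m → g) :
    iterBrk x (Fin.snoc y b) = ⁅iterBrk x y, b⁆ := by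
  unfold iterBrk
  rw [List.ofFn_succ']
  simp [List.foldl_concat]

lemma iterBrk_sub {m : ℕ} (a b : g) (t : Fin m → g) :
    iterBrk (a - b) t = iterBrk a t - iterBrk b t := by
  induction m generalizing a b with
  | zero => simp [iterBrk_zero]
  | succ n ih =>
      rw [iterBrk_tail, iterBrk_tail a, iterBrk_tail b, sub_lie, ih]

/-- If `w ∈ g_r` then the `r`-fold iterated bracket of `w` lies in `g₀`. -/
lemma iterBrk_mem_filt {g₀ : Submodule F g} : ∀ {r : ℕ} {w : g}, w ∈ filt g₀ r →
    ∀ t : Fin r → g, iterBrk w t ∈ g₀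
  | 0, w, hw, t => by rw [iterBrk_zero]; exact hw
  | r + 1, w, hw, t => by
      rw [iterBrk_tail]
      exact iterBrk_mem_filt (hw.2 (t 0)) (Fin.tail t)

/-- Front swap: exchanging the first two bracketings changes the result by an
element of `g₀`, provided `a ∈ g_{r+1}`. -/
lemma frontSwap {g₀ : Submodule F g} {r : ℕ} {a : g} (ha : a ∈ filt g₀ (r + 1))
    (u v : g) (t : Fin r → g) :
    iterBrk ⁅⁅a, u⁆, v⁆ t - iterBrk ⁅⁅a, v⁆, u⁆ t ∈ g₀ := by
  rw [← iterBrk_sub]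
  have hj : ⁅⁅a, u⁆, v⁆ - ⁅⁅a, v⁆, u⁆ = ⁅a, ⁅u, v⁆⁆ := by
    rw [lie_lie, ← lie_skew u ⁅a, v⁆]; abel
  rw [hj]
  exact iterBrk_mem_filt (ha.2 ⁅u, v⁆) t

lemma swap01 {g₀ : Submodule F g} {m : ℕ} {x : g} (hx : x ∈ filt g₀ (m + 1))
    (y : Fin (m + 2) → g) :
    iterBrk x (y ∘ Equiv.swap 0 1) - iterBrk x y ∈ g₀ := by
  have hne0 : ∀ i : Fin m, i.succ.succ ≠ (0 : Fin (m + 2)) := fun i => Fin.succ_ne_zero _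
  have hne1 : ∀ i : Fin m, i.succ.succ ≠ (1 : Fin (m + 2)) := by
    intro i h
    rw [← Fin.succ_zero_eq_one] at h
    exact Fin.succ_ne_zero i (Fin.succ_injective _ h)
  have hy : y = Fin.cons (y 0) (Fin.cons (y 1) (fun i : Fin m => y i.succ.succ)) := by
    funext j
    refine Fin.cases rfl (fun j => Fin.cases rfl (fun j => rfl) j) j
  have hy' : y ∘ Equiv.swap 0 1
      = Fin.cons (y 1) (Fin.cons (y 0) (fun i : Fin m => y i.succ.succ)) := by
    funext j
    refine Fin.cases ?_ (fun j => Fin.cases ?_ (fun j => ?_) j) j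
    · simp [Equiv.swap_apply_left]
    · show y (Equiv.swap 0 1 (Fin.succ 0)) = y 0
      rw [Fin.succ_zero_eq_one, Equiv.swap_apply_right]
    · show y (Equiv.swap 0 1 j.succ.succ) = y j.succ.succ
      rw [Equiv.swap_apply_of_ne_of_ne (hne0 j) (hne1 j)]
  have e1 : iterBrk x (y ∘ Equiv.swap 0 1)
      = iterBrk ⁅⁅x, y 1⁆, y 0⁆ (fun i : Fin m => y i.succ.succ) := by
    rw [hy', iterBrk_cons, iterBrk_cons]
  have e2 : iterBrk x y = iterBrk ⁅⁅x, y 0⁆, y 1⁆ (fun i : Fin m => y i.succ.succ) := by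
    conv_lhs => rw [hy]
    rw [iterBrk_cons, iterBrk_cons]
  rw [e1, e2]
  exact frontSwap hx (y 1) (y 0) _

lemma swapAny {g₀ : Submodule F g} : ∀ {m : ℕ} {x : g}, x ∈ filt g₀ m →
    ∀ (y : Fin (m + 1) → g) (a b : Fin (m + 1)),
      iterBrk x (y ∘ Equiv.swap a b) - iterBrk x y ∈ g₀
  | 0, x, _, y, a, b => by
      have : a = b := by omega
      simp [this, Equiv.swap_self, Equiv.coe_refl, Function.comp_id]
  | m + 1, x, hx, y, a, b => by
      -- key : both indices are successors
      have key : ∀ (y : Fin (m + 2) → g) (a' b' : Fin (m + 1)),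
          iterBrk x (y ∘ Equiv.swap a'.succ b'.succ) - iterBrk x y ∈ g₀ := by
        intro y a' b'
        have hcomp : y ∘ Equiv.swap a'.succ b'.succ
            = Fin.cons (y 0) ((Fin.tail y) ∘ Equiv.swap a' b') := by
          funext j
          refine Fin.cases ?_ (fun j => ?_) j
          · show y (Equiv.swap a'.succ b'.succ 0) = y 0
            rw [Equiv.swap_apply_of_ne_of_ne (Fin.succ_ne_zero a').symm
              (Fin.succ_ne_zero b').symm]
          · show y (Equiv.swap a'.succ b'.succ j.succ) = Fin.tail y (Equiv.swap a' b' j)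
            rw [(Fin.succ_injective _).swap_apply]
            rfl
        rw [hcomp, iterBrk_cons, iterBrk_tail x y]
        exact swapAny (hx.2 (y 0)) (Fin.tail y) a' b'
      -- main : a = 0, b arbitrary
      have main : ∀ b : Fin (m + 2), iterBrk x (y ∘ Equiv.swap 0 b) - iterBrk x y ∈ g₀ := by
        intro b
        refine Fin.cases ?_ (fun b' => ?_) b
        · simp [Equiv.swap_self, Equiv.coe_refl, Function.comp_id]
        · refine Fin.cases ?_ (fun b'' => ?_) b'
          · rw [Fin.succ_zero_eq_one]
            exact swap01 hx y
          · -- b = b''.succ.succ, conjugate by swap 0 1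
            set b : Fin (m + 2) := b''.succ.succ with hbdef
            have hb0 : b ≠ 0 := Fin.succ_ne_zero _
            have hb1 : b ≠ 1 := by
              intro h
              rw [← Fin.succ_zero_eq_one] at h
              exact Fin.succ_ne_zero b'' (Fin.succ_injective _ h)
            have hconj : Equiv.swap (0 : Fin (m + 2)) b
                = Equiv.swap 0 1 * Equiv.swap 1 b * Equiv.swap 0 1 := by
              have := Equiv.swap_mul_swap_mul_swap (x := b) (y := (1 : Fin (m + 2)))
                (z := 0) hb1 hb0
              rw [Equiv.swap_comm 1 0, Equiv.swap_comm b 1] at this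
              rw [← this, Equiv.swap_comm]
            have hfun : y ∘ Equiv.swap 0 b
                = (((y ∘ Equiv.swap 0 1) ∘ Equiv.swap 1 b) ∘ Equiv.swap 0 1) := by
              funext j
              show y (Equiv.swap 0 b j) = _
              rw [hconj]
              rfl
            have t1 := swap01 hx ((y ∘ Equiv.swap 0 1) ∘ Equiv.swap 1 b)
            have t2 : iterBrk x ((y ∘ Equiv.swap 0 1) ∘ Equiv.swap 1 b)
                - iterBrk x (y ∘ Equiv.swap 0 1) ∈ g₀ := by
              have := key (y ∘ Equiv.swap 0 1) 0 b''.succ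
              rwa [Fin.succ_zero_eq_one] at this
            have t3 := swap01 hx y
            have := g₀.add_mem (g₀.add_mem t1 t2) t3
            rw [hfun]
            convert this using 1
            abel
      rcases Fin.eq_zero_or_eq_succ a with rfl | ⟨a', rfl⟩
      · exact main b
      · rcases Fin.eq_zero_or_eq_succ b with rfl | ⟨b', rfl⟩
        · rw [Equiv.swap_comm]
          exact main a'.succ
        · exact key y a' b'

/-- Permutation invariance mod `g₀`. -/
lemma permInv {g₀ : Submodule F g} {m : ℕ} {x : g} (hx : x ∈ filt g₀ m)
    (σ : Equiv.Perm (Fin (m + 1))) (y : Fin (m + 1) → g) :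
    iterBrk x (y ∘ σ) - iterBrk x y ∈ g₀ := by
  revert y
  refine Equiv.Perm.swap_induction_on σ ?_ ?_
  · intro y
    simpa using g₀.zero_mem
  · intro τ i j hij ih y
    have h1 : y ∘ ⇑(Equiv.swap i j * τ) = (y ∘ Equiv.swap i j) ∘ τ := rfl
    have t1 := ih (y ∘ Equiv.swap i j)
    have t2 := swapAny hx y i j
    have := g₀.add_mem t1 t2
    rw [h1]
    convert this using 1
    abel

/-- Changing the last entry by an element of `g₀` changes the iterated bracket
by an element of `g₀`. -/
lemma sncLast {g₀ : Submodule F g} {m : ℕ} {x : g} (hx : x ∈ filt g₀ m)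
    (t : Fin m → g) (u z : g) (hz : z ∈ g₀) (hlie : ∀ a b, a ∈ g₀ → b ∈ g₀ → ⁅a, b⁆ ∈ g₀) :
    iterBrk x (Fin.snoc t (u + z)) - iterBrk x (Fin.snoc t u) ∈ g₀ := by
  rw [iterBrk_snoc, iterBrk_snoc, lie_add]
  simp only [add_sub_cancel_left]
  exact hlie _ _ (iterBrk_mem_filt hx t) hz

/-- Changing any single entry by an element of `g₀`. -/
lemma updInv {g₀ : Submodule F g} {m : ℕ} {x : g} (hx : x ∈ filt g₀ m)
    (y : Fin (m + 1) → g) (i : Fin (m + 1)) (w : g) (hw : w - y i ∈ g₀)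
    (hlie : ∀ a b, a ∈ g₀ → b ∈ g₀ → ⁅a, b⁆ ∈ g₀) :
    iterBrk x (Function.update y i w) - iterBrk x y ∈ g₀ := by
  set σ : Equiv.Perm (Fin (m + 1)) := Equiv.swap i (Fin.last m) with hσ
  have hσlast : σ (Fin.last m) = i := Equiv.swap_apply_right _ _
  have hcomp : ∀ v : g, (Function.update y i v) ∘ σ
      = Function.update (y ∘ σ) (Fin.last m) v := by
    intro v
    funext j
    show Function.update y i v (σ j) = _
    rcases eq_or_ne j (Fin.last m) with rfl | hj
    · rw [hσlast]; simp
    · have h1 : σ j ≠ i := fun h => hj (by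
        have := σ.injective (h.trans hσlast.symm); exact this)
      rw [Function.update_of_ne h1, Function.update_of_ne hj]
      rfl
  have hsnoc : ∀ v : g, Function.update (y ∘ σ) (Fin.last m) v
      = Fin.snoc (Fin.init (y ∘ σ)) v := by
    intro v
    funext j
    rcases eq_or_ne j (Fin.last m) with rfl | hj
    · simp
    · rw [Function.update_of_ne hj]
      rcases Fin.exists_castSucc_eq.mpr hj with ⟨j', rfl⟩
      rw [Fin.snoc_castSucc]
      rfl
  -- value of (y ∘ σ) at last is y i
  have hval : (y ∘ σ) (Fin.last m) = y i := by rw [Function.comp_apply, hσlast]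
  have step1 : iterBrk x (Function.update y i w) -
      iterBrk x ((Function.update y i w) ∘ σ) ∈ g₀ := by
    have := permInv hx σ (Function.update y i w)
    simpa using g₀.neg_mem this
  have step2 : iterBrk x ((Function.update y i w) ∘ σ)
      - iterBrk x (y ∘ σ) ∈ g₀ := by
    rw [hcomp, hsnoc]
    have hyσ : y ∘ σ = Fin.snoc (Fin.init (y ∘ σ)) (y i) := by
      rw [← hval, Fin.snoc_init_self]
    have s2 := sncLast hx (Fin.init (y ∘ σ)) (y i) (w - y i) hw hlie
    have e3 : y i + (w - y i) = w := by abel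
    rw [e3, ← hyσ] at s2
    exact s2
  have step3 := permInv hx σ y
  have := g₀.add_mem (g₀.add_mem step1 step2) step3
  convert this using 1
  abel

/-- Full well-definedness: entry-wise congruence mod `g₀`. -/
lemma congrInv {g₀ : Submodule F g} {m : ℕ} {x : g} (hx : x ∈ filt g₀ m)
    (y y' : Fin (m + 1) → g) (h : ∀ i, y i - y' i ∈ g₀)
    (hlie : ∀ a b, a ∈ g₀ → b ∈ g₀ → ⁅a, b⁆ ∈ g₀) :
    iterBrk x y - iterBrk x y' ∈ g₀ := by
  have main : ∀ n : ℕ, n ≤ m + 1 →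
      iterBrk x (fun i => if (i : ℕ) < n then y' i else y i) - iterBrk x y ∈ g₀ := by
    intro n
    induction n with
    | zero =>
        intro _
        have : (fun i : Fin (m+1) => if (i : ℕ) < 0 then y' i else y i) = y := by
          funext i; simp
        rw [this]; simp
    | succ n ih =>
        intro hn
        have hn' : n ≤ m + 1 := Nat.le_of_succ_le hn
        set j : Fin (m + 1) := ⟨n, hn⟩ with hj
        have hupd : (fun i : Fin (m+1) => if (i : ℕ) < n + 1 then y' i else y i)
            = Function.update (fun i : Fin (m+1) => if (i : ℕ) < n then y' i else y i)
              j (y' j) := by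
          funext i
          rcases eq_or_ne i j with rfl | hij
          · simp; intro h; simp [hj] at h
          · have hne : (i : ℕ) ≠ n := fun h => hij (Fin.ext h)
            rw [Function.update_of_ne hij]
            show (if (i : ℕ) < n + 1 then y' i else y i) = if (i : ℕ) < n then y' i else y i
            by_cases h2 : (i : ℕ) < n
            · rw [if_pos (Nat.lt_succ_of_lt h2), if_pos h2]
            · rw [if_neg (by omega), if_neg h2]
        have hdiff : y' j - (fun i : Fin (m+1) =>
            if (i : ℕ) < n then y' i else y i) j ∈ g₀ := by
          show y' j - (if (j : ℕ) < n then y' j else y j) ∈ g₀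
          have hjn : (j : ℕ) = n := rfl
          rw [if_neg (by omega)]
          have := h j
          simpa using g₀.neg_mem this
        have step := updInv hx (fun i : Fin (m+1) => if (i : ℕ) < n then y' i else y i)
          j (y' j) hdiff hlie
        rw [hupd]
        have := g₀.add_mem step (ih hn')
        convert this using 1
        abel
  have hfin := main (m + 1) le_rfl
  have : (fun i : Fin (m+1) => if (i : ℕ) < m + 1 then y' i else y i) = y' := by
    funext i; rw [if_pos i.isLt]
  rw [this] at hfin
  have := g₀.add_mem (g₀.neg_mem hfin) (g₀.zero_mem)
  convert this using 1
  abel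

/-- The iterated bracket, as a multilinear map (bundled linearly in `x` too). -/
def itMultiL : ∀ m : ℕ, g →ₗ[F] MultilinearMap F (fun _ : Fin m => g) g
  | 0 =>
    { toFun := fun x => MultilinearMap.constOfIsEmpty F _ x
      map_add' := fun a b => by ext y; simp
      map_smul' := fun c a => by ext y; simp }
  | m + 1 =>
    { toFun := fun x => LinearMap.uncurryLeft
        (((itMultiL m : g →ₗ[F] _)).comp (brk x))
      map_add' := fun a b => by
        ext y
        simp [brk, add_lie]
      map_smul' := fun c a => by
        ext y
        simp [brk, smul_lie] }

lemma itMultiL_apply : ∀ {m : ℕ} (x : g) (y : Fin m → g),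
    itMultiL (F := F) m x y = iterBrk x y
  | 0, x, y => by
      rw [iterBrk_zero]
      rfl
  | m + 1, x, y => by
      show itMultiL m ⁅x, y 0⁆ (Fin.tail y) = iterBrk x y
      rw [itMultiL_apply, ← iterBrk_tail]

/-- Characterization of membership in the next filtration step. -/
lemma filt_succ_iff {g₀ : Submodule F g} : ∀ {k : ℕ} {x : g}, x ∈ filt g₀ k →
    (x ∈ filt g₀ (k + 1) ↔ ∀ y : Fin (k + 1) → g, iterBrk x y ∈ g₀)
  | 0, x, hx => by
      constructor
      · intro h y
        rw [iterBrk_tail, iterBrk_zero]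
        exact h.2 (y 0)
      · intro h
        refine ⟨hx, fun y => ?_⟩
        have := h (fun _ => y)
        rwa [iterBrk_tail, iterBrk_zero] at this
  | k + 1, x, hx => by
      constructor
      · intro h y
        rw [iterBrk_tail]
        exact ((filt_succ_iff (hx.2 (y 0))).mp ⟨hx.2 (y 0), (h.2 (y 0)).2⟩) (Fin.tail y)
      · intro h
        refine ⟨hx, fun y0 => ?_⟩
        exact (filt_succ_iff (hx.2 y0)).mpr (fun t => by
          rw [← iterBrk_cons]
          exact h (Fin.cons y0 t))

/-- Let `x ∈ g_k`.  Then (i) the assignment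
`(y 0, …, y k) ↦ π [⋯[[x, y 0], y 1]⋯, y k]` descends to a well-defined `(k+1)`-multilinear
map `T : (g/g₀)^{k+1} → g/g₀` (in particular its value only depends on the classes of the
`y i` mod `g₀`); (ii) `T` is symmetric; (iii) every one-variable slice of `T` lies in the
image `ad₀(g₀) ⊆ End (g/g₀)`; and (iv) `T = 0` iff `x ∈ g_{k+1}`. -/
theorem exists_symmetric_multilinear (g₀ : LieSubalgebra F g) (k : ℕ) (x : g)
    (hx : x ∈ filt g₀.toSubmodule k) :
    ∃ T : MultilinearMap F (fun _ : Fin (k + 1) => g ⧸ g₀.toSubmodule) (g ⧸ g₀.toSubmodule),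
      (∀ y : Fin (k + 1) → g,
        T (fun i => Submodule.Quotient.mk (y i)) = Submodule.Quotient.mk (iterBrk x y)) ∧
      (∀ σ : Equiv.Perm (Fin (k + 1)), ∀ v : Fin (k + 1) → g ⧸ g₀.toSubmodule,
        T (fun i => v (σ i)) = T v) ∧
      (∀ v : Fin k → g ⧸ g₀.toSubmodule, ∃ z : g₀,
        ∀ w : g ⧸ g₀.toSubmodule, T (Fin.snoc v w) = ad0 g₀ z w) ∧
      (T = 0 ↔ x ∈ filt g₀.toSubmodule (k + 1)) := by
  classical
  set p : Submodule F g := g₀.toSubmodule with hp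
  have hlie : ∀ a b : g, a ∈ p → b ∈ p → ⁅a, b⁆ ∈ p := fun a b ha hb => g₀.lie_mem ha hb
  obtain ⟨s, hs⟩ := (p.mkQ).exists_rightInverse_of_surjective (Submodule.range_mkQ p)
  have hsec : ∀ v : g ⧸ p, Submodule.Quotient.mk (s v) = v := by
    intro v
    have := congrArg (fun f => f v) hs
    simpa using this
  set T : MultilinearMap F (fun _ : Fin (k + 1) => g ⧸ p) (g ⧸ p) :=
    ((p.mkQ).compMultilinearMap (itMultiL (k + 1) x)).compLinearMap (fun _ => s) with hT
  have Tapp : ∀ v : Fin (k + 1) → g ⧸ p,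
      T v = Submodule.Quotient.mk (iterBrk x (fun i => s (v i))) := by
    intro v
    simp [hT, itMultiL_apply]
  have mkeq : ∀ y y' : Fin (k + 1) → g, (∀ i, y i - y' i ∈ p) →
      Submodule.Quotient.mk (iterBrk x y) =
        (Submodule.Quotient.mk (iterBrk x y') : g ⧸ p) := by
    intro y y' h
    rw [Submodule.Quotient.eq]
    exact congrInv hx y y' h hlie
  have prop1 : ∀ y : Fin (k + 1) → g,
      T (fun i => Submodule.Quotient.mk (y i)) = Submodule.Quotient.mk (iterBrk x y) := by
    intro y
    rw [Tapp]
    refine mkeq _ _ fun i => ?_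
    rw [← Submodule.Quotient.eq, hsec]
  refine ⟨T, prop1, ?_, ?_, ?_⟩
  · -- symmetry
    intro σ v
    set u : Fin (k + 1) → g := fun i => (Submodule.Quotient.mk_surjective p (v i)).choose
      with hu
    have huv : ∀ i, Submodule.Quotient.mk (u i) = v i :=
      fun i => (Submodule.Quotient.mk_surjective p (v i)).choose_spec
    have h1 : (fun i => v (σ i)) = fun i => Submodule.Quotient.mk (u (σ i)) := by
      funext i; rw [huv]
    have h2 : v = fun i => Submodule.Quotient.mk (u i) := by
      funext i; rw [huv]
    rw [h1, h2, prop1, prop1]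
    rw [Submodule.Quotient.eq]
    exact permInv hx σ u
  · -- slices lie in the image of ad0
    intro v
    set u : Fin k → g := fun i => (Submodule.Quotient.mk_surjective p (v i)).choose with hu
    have huv : ∀ i, Submodule.Quotient.mk (u i) = v i :=
      fun i => (Submodule.Quotient.mk_surjective p (v i)).choose_spec
    refine ⟨⟨iterBrk x u, iterBrk_mem_filt hx u⟩, ?_⟩
    intro w
    obtain ⟨yw, rfl⟩ := Submodule.Quotient.mk_surjective p w
    have hsnoc : (Fin.snoc v (Submodule.Quotient.mk yw) : Fin (k+1) → g ⧸ p)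
        = fun i => Submodule.Quotient.mk ((Fin.snoc u yw : Fin (k+1) → g) i) := by
      funext i
      rcases eq_or_ne i (Fin.last k) with rfl | hi
      · simp
      · rcases Fin.exists_castSucc_eq.mpr hi with ⟨j, rfl⟩
        rw [Fin.snoc_castSucc, Fin.snoc_castSucc, huv]
    rw [hsnoc, prop1, iterBrk_snoc]
    show _ = Submodule.mapQ _ _ _ _ (Submodule.Quotient.mk yw)
    rfl
  · -- T = 0 iff x ∈ filt (k+1)
    constructor
    · intro hT0
      refine (filt_succ_iff hx).mpr fun y => ?_
      have := prop1 y
      rw [hT0] at this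
      have h0 : (0 : MultilinearMap F (fun _ : Fin (k+1) => g ⧸ p) (g ⧸ p))
        (fun i => Submodule.Quotient.mk (y i)) = 0 := rfl
      rw [h0] at this
      rwa [eq_comm, Submodule.Quotient.mk_eq_zero] at this
    · intro hx1
      ext v
      have h := Tapp v
      have : iterBrk x (fun i => s (v i)) ∈ p :=
        (filt_succ_iff hx).mp hx1 _
      rw [h]
      show Submodule.Quotient.mk _ = 0
      rwa [Submodule.Quotient.mk_eq_zero]
end

section
/- (Proposition 21: the infinitesimal order is at most the prolongation order of the first order isotropy algebra.) Let g be a finite-dimensional Lie algebra over a field F, g₀ ⊆ g a Lie subalgebra such that the only Lie ideal of g contained in g₀ is {0}, with descending filtration g_0 := g₀, g_{k+1} := {x ∈ g_k : [x, y] ∈ g_k for all y ∈ g}. Let V := g/g₀, and let 𝔞 := ad₀(g₀) ⊆ End(V) where ad₀(z)(y mod g₀) = [z, y] mod g₀. Fix k ≥ 0 and suppose that the k-th prolongation of 𝔞 vanishes, i.e. the only symmetric (k+1)-multilinear map T : V^{k+1} → V such that for all v_1, …, v_k ∈ V the linear map v ↦ T(v_1, …, v_k, v) belongs to 𝔞 is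 T = 0. Then g_k = {0}. -/
variable {F : Type*} [Field F] {g : Type*} [LieRing g] [LieAlgebra F g]

namespace P21

/-- iterated bracket `[..[[x, y 0], y 1], ..., y (n-1)]`. -/
def iter : ∀ n, g → (Fin n → g) → g
  | 0, x, _ => x
  | n+1, x, y => iter n ⁅x, y 0⁆ (Fin.tail y)

lemma iter_succ (n : ℕ) (x : g) (y : Fin (n+1) → g) :
    iter (n+1) x y = iter n ⁅x, y 0⁆ (Fin.tail y) := rfl

variable {g₀ : Submodule F g}

lemma mem_filt_succ {x : g} {n : ℕ} :
    x ∈ filt g₀ (n+1) ↔ x ∈ filt g₀ n ∧ ∀ y : g, ⁅x, y⁆ ∈ filt g₀ n := Iff.rfl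

lemma filt_succ_le (n : ℕ) : filt g₀ (n+1) ≤ filt g₀ n := fun _ hx => hx.1

lemma filt_le_zero : ∀ n, filt g₀ n ≤ g₀
  | 0 => le_rfl
  | n+1 => (filt_succ_le n).trans (filt_le_zero n)

lemma iter_mem_filt {m : ℕ} :
    ∀ n (x : g), x ∈ filt g₀ (m + n) → ∀ y, iter n x y ∈ filt g₀ m
  | 0, _, hx, _ => hx
  | n+1, x, hx, y => iter_mem_filt n _ ((mem_filt_succ.mp hx).2 (y 0)) _

lemma iter_mem_zero {n : ℕ} {x : g} (hx : x ∈ filt g₀ n) (y : Fin n → g) :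
    iter n x y ∈ g₀ :=
  filt_le_zero 0 (iter_mem_filt n x (by rwa [Nat.zero_add]) y)

lemma iter_add_left : ∀ n (x x' : g) (y : Fin n → g),
    iter n (x + x') y = iter n x y + iter n x' y
  | 0, _, _, _ => rfl
  | n+1, x, x', y => by
    rw [iter_succ, iter_succ, iter_succ, add_lie, iter_add_left n]

lemma iter_smul_left : ∀ n (c : F) (x : g) (y : Fin n → g),
    iter n (c • x) y = c • iter n x y
  | 0, _, _, _ => rfl
  | n+1, c, x, y => by
    rw [iter_succ, iter_succ, smul_lie, iter_smul_left n]

lemma iter_update_add : ∀ n (x : g) (y : Fin n → g) (i : Fin n) (a b : g),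
    iter n x (Function.update y i (a + b)) =
      iter n x (Function.update y i a) + iter n x (Function.update y i b)
  | n+1, x, y, i, a, b => by
    induction i using Fin.cases with
    | zero =>
      rw [iter_succ, iter_succ, iter_succ, Fin.tail_update_zero, Fin.tail_update_zero,
        Fin.tail_update_zero, Function.update_self, Function.update_self,
        Function.update_self, lie_add, iter_add_left]
    | succ j =>
      rw [iter_succ, iter_succ, iter_succ, Fin.tail_update_succ, Fin.tail_update_succ,
        Fin.tail_update_succ, Function.update_of_ne (Fin.succ_ne_zero j).symm,
        Function.update_of_ne (Fin.succ_ne_zero j).symm,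
        Function.update_of_ne (Fin.succ_ne_zero j).symm,
        iter_update_add n]

lemma iter_update_smul : ∀ n (x : g) (y : Fin n → g) (i : Fin n) (c : F) (a : g),
    iter n x (Function.update y i (c • a)) = c • iter n x (Function.update y i a)
  | n+1, x, y, i, c, a => by
    induction i using Fin.cases with
    | zero =>
      rw [iter_succ, iter_succ, Fin.tail_update_zero, Fin.tail_update_zero,
        Function.update_self, Function.update_self, lie_smul, iter_smul_left]
    | succ j =>
      rw [iter_succ, iter_succ, Fin.tail_update_succ, Fin.tail_update_succ,
        Function.update_of_ne (Fin.succ_ne_zero j).symm,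
        Function.update_of_ne (Fin.succ_ne_zero j).symm,
        iter_update_smul n]

lemma tail_snoc {α : Type*} {n : ℕ} (y : Fin (n+1) → α) (b : α) :
    @Fin.tail (n+1) (fun _ => α) (Fin.snoc y b) = Fin.snoc (Fin.tail y) b := by
  funext i
  induction i using Fin.lastCases with
  | last => simp [Fin.tail, Fin.succ_last]
  | cast j => simp [Fin.tail, Fin.succ_castSucc, -Fin.castSucc_succ]

lemma iter_snoc : ∀ n (x : g) (y : Fin n → g) (b : g),
    iter (n+1) x (Fin.snoc y b) = ⁅iter n x y, b⁆
  | 0, x, y, b => by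
    have h0 : (Fin.snoc y b : Fin 1 → g) 0 = b := by
      rw [show (0 : Fin 1) = Fin.last 0 from rfl, Fin.snoc_last]
    rw [iter_succ, h0]; rfl
  | n+1, x, y, b => by
    have h0 : (Fin.snoc y b : Fin (n+2) → g) 0 = y 0 := by
      rw [show (0 : Fin (n+2)) = Fin.castSucc 0 from rfl, Fin.snoc_castSucc]
    rw [iter_succ, tail_snoc, h0, iter_snoc n]
    rfl

section
variable (G : LieSubalgebra F g)
local notation "pi" => (Submodule.Quotient.mk : g → g ⧸ G.toSubmodule)

/-- `[filt m, g₀] ⊆ filt m`. -/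
lemma lie_mem_filt_of_mem_zero : ∀ (m : ℕ) (x : g), x ∈ filt G.toSubmodule m →
    ∀ z ∈ G, ⁅x, z⁆ ∈ filt G.toSubmodule m
  | 0, x, hx, z, hz => G.lie_mem hx hz
  | m+1, x, hx, z, hz => by
    refine mem_filt_succ.mpr ⟨lie_mem_filt_of_mem_zero m x hx.1 z hz, fun y => ?_⟩
    have h : ⁅⁅x, z⁆, y⁆ = ⁅x, ⁅z, y⁆⁆ + ⁅⁅x, y⁆, z⁆ := by
      rw [lie_lie, sub_eq_add_neg, lie_skew]
    rw [h]
    exact (filt G.toSubmodule m).add_mem (hx.2 _)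
      (lie_mem_filt_of_mem_zero m _ (hx.2 y) z hz)

/-- well-definedness modulo `g₀` of the iterated bracket. -/
lemma pi_iter_congr : ∀ (n : ℕ) (x : g), x ∈ filt G.toSubmodule n →
    ∀ (y y' : Fin (n+1) → g), (∀ i, pi (y i) = pi (y' i)) →
      pi (iter (n+1) x y) = pi (iter (n+1) x y')
  | 0, x, hx, y, y', h => by
    have h0 := (Submodule.Quotient.eq _).mp (h 0)
    rw [show iter 1 x y = ⁅x, y 0⁆ from rfl, show iter 1 x y' = ⁅x, y' 0⁆ from rfl,
      Submodule.Quotient.eq, ← lie_sub]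
    exact G.lie_mem hx h0
  | n+1, x, hx, y, y', h => by
    have hz : y 0 - y' 0 ∈ G.toSubmodule := (Submodule.Quotient.eq _).mp (h 0)
    have hsum : y' 0 + (y 0 - y' 0) = y 0 := by abel
    have h1 : iter (n+1) ⁅x, y 0 - y' 0⁆ (Fin.tail y) ∈ G.toSubmodule :=
      iter_mem_zero (lie_mem_filt_of_mem_zero G (n+1) x hx _ hz) _
    calc pi (iter (n+2) x y)
        = pi (iter (n+1) ⁅x, y' 0⁆ (Fin.tail y) + iter (n+1) ⁅x, y 0 - y' 0⁆ (Fin.tail y)) := by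
          have hxy : ⁅x, y 0⁆ = ⁅x, y' 0⁆ + ⁅x, y 0 - y' 0⁆ := by rw [← lie_add, hsum]
          rw [iter_succ, hxy, iter_add_left]
      _ = pi (iter (n+1) ⁅x, y' 0⁆ (Fin.tail y)) := by
          rw [Submodule.Quotient.mk_add, (Submodule.Quotient.mk_eq_zero _).mpr h1, add_zero]
      _ = pi (iter (n+1) ⁅x, y' 0⁆ (Fin.tail y')) :=
          pi_iter_congr n _ (hx.2 _) _ _ (fun i => h i.succ)
      _ = pi (iter (n+2) x y') := rfl

/-- extend a permutation of `Fin (n+1)` to `Fin (n+2)` fixing `0`. -/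
def ext {n : ℕ} (τ : Equiv.Perm (Fin (n+1))) : Equiv.Perm (Fin (n+2)) :=
  Equiv.Perm.decomposeFin.symm (0, τ)

lemma ext_apply_zero {n : ℕ} (τ : Equiv.Perm (Fin (n+1))) : ext τ 0 = 0 := by
  simp [ext]

lemma ext_apply_succ {n : ℕ} (τ : Equiv.Perm (Fin (n+1))) (i : Fin (n+1)) :
    ext τ i.succ = (τ i).succ := by
  simp [ext, Equiv.Perm.decomposeFin_symm_apply_succ]

lemma swap_succ {n : ℕ} (i j : Fin (n+1)) :
    Equiv.swap i.succ j.succ = ext (Equiv.swap i j) := by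
  ext m
  induction m using Fin.cases with
  | zero =>
    rw [ext_apply_zero, Equiv.swap_apply_of_ne_of_ne (Fin.succ_ne_zero i).symm
      (Fin.succ_ne_zero j).symm]
  | succ m =>
    rw [ext_apply_succ, Equiv.swap_apply_def, Equiv.swap_apply_def]
    simp only [Fin.succ_inj]
    split_ifs <;> rfl

lemma perm_decomp {n : ℕ} (σ : Equiv.Perm (Fin (n+2))) :
    ∃ p τ, σ = Equiv.swap 0 p * ext τ := by
  obtain ⟨⟨p, τ⟩, hd⟩ : ∃ d, Equiv.Perm.decomposeFin σ = d := ⟨_, rfl⟩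
  have hσ : σ = Equiv.Perm.decomposeFin.symm (p, τ) := by
    rw [← hd]; exact (Equiv.symm_apply_apply _ σ).symm
  refine ⟨p, τ, ?_⟩
  ext m
  rw [hσ]
  induction m using Fin.cases with
  | zero => simp [ext_apply_zero]
  | succ m => simp [ext_apply_succ]

lemma iter_two {n : ℕ} (x : g) (w : Fin (n+2) → g) :
    iter (n+2) x w = iter n ⁅⁅x, w 0⁆, w (Fin.succ 0)⁆ (fun i => w i.succ.succ) := rfl

lemma comp_mul {α : Type*} {n : ℕ} (y : Fin n → α) (f h : Equiv.Perm (Fin n)) :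
    y ∘ ⇑(f * h) = (y ∘ ⇑f) ∘ ⇑h := rfl

/-- symmetry of the iterated bracket modulo `g₀`. -/
lemma pi_iter_perm : ∀ (n : ℕ) (x : g), x ∈ filt G.toSubmodule n →
    ∀ (σ : Equiv.Perm (Fin (n+1))) (y : Fin (n+1) → g),
      pi (iter (n+1) x (y ∘ σ)) = pi (iter (n+1) x y) := by
  intro n
  induction n with
  | zero =>
    intro x hx σ y
    have : y ∘ ⇑σ = y := funext fun i =>
      congrArg y ((Fin.eq_zero (σ i)).trans (Fin.eq_zero i).symm)
    rw [this]
  | succ n IH =>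
    intro x hx σ y
    -- (A) permutations fixing 0
    have hA : ∀ (τ : Equiv.Perm (Fin (n+1))) (w : Fin (n+2) → g),
        pi (iter (n+2) x (w ∘ ext τ)) = pi (iter (n+2) x w) := by
      intro τ w
      have h0 : (w ∘ ext τ) 0 = w 0 := congrArg w (ext_apply_zero τ)
      have ht : Fin.tail (w ∘ ext τ) = Fin.tail w ∘ τ :=
        funext fun i => congrArg w (ext_apply_succ τ i)
      rw [iter_succ, h0, ht, IH ⁅x, w 0⁆ (hx.2 (w 0)) τ (Fin.tail w), ← iter_succ]
    -- (C) the front transposition, by the Jacobi identity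
    have hC : ∀ (w : Fin (n+2) → g),
        pi (iter (n+2) x (w ∘ Equiv.swap 0 (Fin.succ 0))) = pi (iter (n+2) x w) := by
      intro w
      have key2 : ∀ (a b : g) (r : Fin n → g),
          pi (iter n ⁅⁅x, a⁆, b⁆ r) = pi (iter n ⁅⁅x, b⁆, a⁆ r) := by
        intro a b r
        have hj : ⁅⁅x, a⁆, b⁆ = ⁅x, ⁅a, b⁆⁆ + ⁅⁅x, b⁆, a⁆ := by
          rw [lie_lie, sub_eq_add_neg, lie_skew]
        rw [hj, iter_add_left, Submodule.Quotient.mk_add,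
          (Submodule.Quotient.mk_eq_zero _).mpr (iter_mem_zero (hx.2 ⁅a, b⁆) r), zero_add]
      have e0 : (w ∘ Equiv.swap 0 (Fin.succ 0)) 0 = w (Fin.succ 0) :=
        congrArg w (Equiv.swap_apply_left _ _)
      have e1 : (w ∘ Equiv.swap 0 (Fin.succ 0)) (Fin.succ 0) = w 0 :=
        congrArg w (Equiv.swap_apply_right _ _)
      have e2 : (fun i : Fin n => (w ∘ Equiv.swap 0 (Fin.succ 0)) i.succ.succ) =
          (fun i : Fin n => w i.succ.succ) := by
        funext i
        exact congrArg w (Equiv.swap_apply_of_ne_of_ne (Fin.succ_ne_zero _)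
          (fun h => Fin.succ_ne_zero _ (Fin.succ_injective _ h)))
      rw [iter_two, e0, e1, e2, key2 (w (Fin.succ 0)) (w 0), ← iter_two]
    -- (B) transpositions of two nonzero points
    have hB : ∀ (i j : Fin (n+1)) (w : Fin (n+2) → g),
        pi (iter (n+2) x (w ∘ Equiv.swap i.succ j.succ)) = pi (iter (n+2) x w) := by
      intro i j w
      rw [swap_succ]; exact hA _ w
    -- (D) swaps with 0
    have hD : ∀ (p : Fin (n+2)) (w : Fin (n+2) → g),
        pi (iter (n+2) x (w ∘ Equiv.swap 0 p)) = pi (iter (n+2) x w) := by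
      intro p w
      induction p using Fin.cases with
      | zero =>
        have : w ∘ ⇑(Equiv.swap (0 : Fin (n+2)) 0) = w := by
          rw [Equiv.swap_self]; rfl
        rw [this]
      | succ q =>
        have h10 : Equiv.swap (Fin.succ 0) q.succ (0 : Fin (n+2)) = 0 :=
          Equiv.swap_apply_of_ne_of_ne (Fin.succ_ne_zero 0).symm (Fin.succ_ne_zero q).symm
        have h11 : Equiv.swap (Fin.succ 0) q.succ (Fin.succ 0) = q.succ :=
          Equiv.swap_apply_left _ _
        have hconj : Equiv.swap (0 : Fin (n+2)) q.succ =
            Equiv.swap (Fin.succ 0) q.succ * Equiv.swap 0 (Fin.succ 0) *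
              (Equiv.swap (Fin.succ 0) q.succ)⁻¹ := by
          rw [← Equiv.swap_apply_apply, h10, h11]
        calc pi (iter (n+2) x (w ∘ ⇑(Equiv.swap 0 q.succ)))
            = pi (iter (n+2) x (((w ∘ ⇑(Equiv.swap (Fin.succ 0) q.succ)) ∘
                ⇑(Equiv.swap 0 (Fin.succ 0))) ∘ ⇑(Equiv.swap (Fin.succ 0) q.succ))) := by
              rw [hconj, Equiv.swap_inv, comp_mul, comp_mul]
          _ = pi (iter (n+2) x ((w ∘ ⇑(Equiv.swap (Fin.succ 0) q.succ)) ∘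
                ⇑(Equiv.swap 0 (Fin.succ 0)))) := hB 0 q _
          _ = pi (iter (n+2) x (w ∘ ⇑(Equiv.swap (Fin.succ 0) q.succ))) := hC _
          _ = pi (iter (n+2) x w) := hB 0 q w
    -- assemble
    obtain ⟨p, τ, hσ⟩ := perm_decomp σ
    rw [hσ, comp_mul, hA τ (y ∘ ⇑(Equiv.swap 0 p))]
    exact hD p y

lemma mem_filt_succ_of_iter : ∀ (n : ℕ) (x : g), x ∈ filt G.toSubmodule n →
    (∀ y : Fin (n+1) → g, iter (n+1) x y ∈ G.toSubmodule) →
    x ∈ filt G.toSubmodule (n+1)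
  | 0, x, hx, h => mem_filt_succ.mpr ⟨hx, fun w => by
      have := h (fun _ => w)
      rwa [show iter 1 x (fun _ => w) = ⁅x, w⁆ from rfl] at this⟩
  | n+1, x, hx, h =>
    mem_filt_succ.mpr ⟨hx, fun w =>
      mem_filt_succ_of_iter n ⁅x, w⁆ (hx.2 w) (fun y' => by
        have h2 : iter (n+2) x (Fin.cons w y') = iter (n+1) ⁅x, w⁆ y' := by
          rw [iter_succ, Fin.cons_zero, Fin.tail_cons]
        rw [← h2]; exact h _)⟩

/-- a set-theoretic section of the quotient map. -/
noncomputable def sec (v : g ⧸ G.toSubmodule) : g :=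
  (Submodule.Quotient.mk_surjective _ v).choose

lemma sec_spec (v : g ⧸ G.toSubmodule) : pi (sec G v) = v :=
  (Submodule.Quotient.mk_surjective _ v).choose_spec

end
end P21

open P21

/-- (Proposition 21)  Let `(g, g₀)` be an effective pair with `g` finite dimensional, and
let `𝔞 := ad₀(g₀) ⊆ End (g/g₀)` be the first order isotropy algebra.  If the `k`-th
prolongation of `𝔞` vanishes — i.e. the only symmetric `(k+1)`-multilinear map
`T : (g/g₀)^{k+1} → g/g₀` all of whose one-variable slices lie in `𝔞` is `T = 0` —
then `g_k = {0}`: the infinitesimal order is at most the prolongation order of `𝔞`. -/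
theorem order_le_prolongation_order (g₀ : LieSubalgebra F g) [FiniteDimensional F g]
    (heff : ∀ I : LieIdeal F g, I.toSubmodule ≤ g₀.toSubmodule → I = ⊥)
    (k : ℕ)
    (hprol : ∀ T : MultilinearMap F (fun _ : Fin (k + 1) => g ⧸ g₀.toSubmodule)
        (g ⧸ g₀.toSubmodule),
      (∀ σ : Equiv.Perm (Fin (k + 1)), ∀ v : Fin (k + 1) → g ⧸ g₀.toSubmodule,
        T (fun i => v (σ i)) = T v) →
      (∀ v : Fin k → g ⧸ g₀.toSubmodule, ∃ z : g₀,
        ∀ w : g ⧸ g₀.toSubmodule, T (Fin.snoc v w) = ad0 g₀ z w) →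
      T = 0) :
    filt g₀.toSubmodule k = ⊥ := by
  classical
  set p : Submodule F g := g₀.toSubmodule with hp
  -- Step 1: every element of `filt k` has all its `(k+1)`-fold brackets in `g₀`.
  have key : ∀ x ∈ filt p k, ∀ y : Fin (k+1) → g, iter (k+1) x y ∈ p := by
    intro x hx
    set Y : (Fin (k+1) → g ⧸ p) → Fin (k+1) → g := fun v j => sec g₀ (v j) with hY
    have hYspec : ∀ (v : Fin (k+1) → g ⧸ p) (j : Fin (k+1)),
        Submodule.Quotient.mk (Y v j) = v j := fun v j => sec_spec g₀ (v j)
    set T : MultilinearMap F (fun _ : Fin (k + 1) => g ⧸ p) (g ⧸ p) :=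
      { toFun := fun v => Submodule.Quotient.mk (iter (k+1) x (Y v))
        map_update_add' := by
          intro dec v i a b
          obtain rfl : dec = instDecidableEqFin (k+1) := Subsingleton.elim _ _
          have congrU : ∀ (c : g ⧸ p) (yc : g), Submodule.Quotient.mk yc = c →
              (Submodule.Quotient.mk (iter (k+1) x (Function.update (Y v) i yc))
                : g ⧸ p) =
                Submodule.Quotient.mk (iter (k+1) x (Y (Function.update v i c))) := by
            intro c yc hc
            apply pi_iter_congr g₀ k x hx
            intro j
            rcases eq_or_ne j i with rfl | hne
            · rw [Function.update_self, hY]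
              simp only [Function.update_self]
              rw [hc, sec_spec]
            · rw [Function.update_of_ne hne, hY]
              simp only [Function.update_of_ne hne]
          calc (Submodule.Quotient.mk (iter (k+1) x (Y (Function.update v i (a + b))))
              : g ⧸ p)
              = Submodule.Quotient.mk
                  (iter (k+1) x (Function.update (Y v) i (sec g₀ a + sec g₀ b))) :=
                (congrU (a + b) (sec g₀ a + sec g₀ b) (by
                  rw [Submodule.Quotient.mk_add, sec_spec, sec_spec])).symm
            _ = Submodule.Quotient.mk (iter (k+1) x (Function.update (Y v) i (sec g₀ a)))
                + Submodule.Quotient.mk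
                    (iter (k+1) x (Function.update (Y v) i (sec g₀ b))) := by
                rw [iter_update_add, Submodule.Quotient.mk_add]
            _ = Submodule.Quotient.mk (iter (k+1) x (Y (Function.update v i a)))
                + Submodule.Quotient.mk (iter (k+1) x (Y (Function.update v i b))) := by
                rw [congrU a (sec g₀ a) (sec_spec g₀ a), congrU b (sec g₀ b) (sec_spec g₀ b)]
        map_update_smul' := by
          intro dec v i c a
          obtain rfl : dec = instDecidableEqFin (k+1) := Subsingleton.elim _ _
          have congrU : ∀ (d : g ⧸ p) (yd : g), Submodule.Quotient.mk yd = d →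
              (Submodule.Quotient.mk (iter (k+1) x (Function.update (Y v) i yd))
                : g ⧸ p) =
                Submodule.Quotient.mk (iter (k+1) x (Y (Function.update v i d))) := by
            intro d yd hd
            apply pi_iter_congr g₀ k x hx
            intro j
            rcases eq_or_ne j i with rfl | hne
            · rw [Function.update_self, hY]
              simp only [Function.update_self]
              rw [hd, sec_spec]
            · rw [Function.update_of_ne hne, hY]
              simp only [Function.update_of_ne hne]
          calc (Submodule.Quotient.mk (iter (k+1) x (Y (Function.update v i (c • a))))
              : g ⧸ p)
              = Submodule.Quotient.mk
                  (iter (k+1) x (Function.update (Y v) i (c • sec g₀ a))) :=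
                (congrU (c • a) (c • sec g₀ a) (by
                  rw [Submodule.Quotient.mk_smul, sec_spec])).symm
            _ = c • Submodule.Quotient.mk (iter (k+1) x (Function.update (Y v) i (sec g₀ a)))
                := by rw [iter_update_smul, Submodule.Quotient.mk_smul]
            _ = c • Submodule.Quotient.mk (iter (k+1) x (Y (Function.update v i a))) := by
                rw [congrU a (sec g₀ a) (sec_spec g₀ a)] } with hT
    have hsym : ∀ σ : Equiv.Perm (Fin (k + 1)), ∀ v : Fin (k + 1) → g ⧸ p,
        T (fun i => v (σ i)) = T v := by
      intro σ v
      show (Submodule.Quotient.mk (iter (k+1) x (Y (fun i => v (σ i)))) : g ⧸ p)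
        = Submodule.Quotient.mk (iter (k+1) x (Y v))
      have : Y (fun i => v (σ i)) = (Y v) ∘ σ := rfl
      rw [this]
      exact pi_iter_perm g₀ k x hx σ (Y v)
    have hslice : ∀ v : Fin k → g ⧸ p, ∃ z : g₀,
        ∀ w : g ⧸ p, T (Fin.snoc v w) = ad0 g₀ z w := by
      intro v
      have hzmem : iter k x (fun i => sec g₀ (v i)) ∈ g₀ :=
        (LieSubalgebra.mem_toSubmodule g₀).mp (iter_mem_zero hx _)
      refine ⟨⟨iter k x (fun i => sec g₀ (v i)), hzmem⟩, fun w => ?_⟩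
      show (Submodule.Quotient.mk (iter (k+1) x (Y (Fin.snoc v w))) : g ⧸ p) = _
      have h1 : (Submodule.Quotient.mk (iter (k+1) x (Y (Fin.snoc v w))) : g ⧸ p)
          = Submodule.Quotient.mk
              (iter (k+1) x (Fin.snoc (fun i => sec g₀ (v i)) (sec g₀ w))) := by
        apply pi_iter_congr g₀ k x hx
        intro j
        induction j using Fin.lastCases with
        | last =>
          rw [hY]; simp only [Fin.snoc_last]
        | cast j =>
          rw [hY]; simp only [Fin.snoc_castSucc]
      have h4 : ad0 g₀ (⟨iter k x fun i => sec g₀ (v i), hzmem⟩ : g₀) w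
          = Submodule.Quotient.mk ⁅iter k x (fun i => sec g₀ (v i)), sec g₀ w⁆ := by
        conv_lhs => rw [← sec_spec g₀ w]
        rfl
      rw [h1, iter_snoc, h4]
    have hT0 := hprol T hsym hslice
    intro y
    have h3 : (Submodule.Quotient.mk (iter (k+1) x y) : g ⧸ p)
        = T (fun i => Submodule.Quotient.mk (y i)) := by
      show _ = (Submodule.Quotient.mk (iter (k+1) x
        (Y (fun i => Submodule.Quotient.mk (y i)))) : g ⧸ p)
      apply pi_iter_congr g₀ k x hx
      intro j
      exact (hYspec (fun i => Submodule.Quotient.mk (y i)) j).symm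
    rw [hT0] at h3
    exact (Submodule.Quotient.mk_eq_zero _).mp (h3.trans rfl)
  -- Step 2: `filt k` is stable, hence a Lie ideal contained in `g₀`.
  have key2 : ∀ x ∈ filt p k, x ∈ filt p (k+1) := fun x hx =>
    mem_filt_succ_of_iter g₀ k x hx (key x hx)
  let I : LieIdeal F g :=
    { filt p k with
      lie_mem := fun {x m} hm => by
        have h1 : ⁅m, x⁆ ∈ filt p k := (key2 m hm).2 x
        have h2 : ⁅x, m⁆ = -⁅m, x⁆ := (lie_skew x m).symm
        show ⁅x, m⁆ ∈ filt p k
        rw [h2]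
        exact neg_mem h1 }
  have hI : I.toSubmodule ≤ g₀.toSubmodule := filt_le_zero k
  have hbot := heff I hI
  calc filt p k = I.toSubmodule := rfl
    _ = (⊥ : LieIdeal F g).toSubmodule := by rw [hbot]
    _ = ⊥ := LieSubmodule.bot_toSubmodule
end

section
/- Let U ⊆ ℂ be a nonempty open connected set and let f : ℂ → ℂ be holomorphic on U with f′(z) ≠ 0 for all z ∈ U. Suppose f satisfies the Schwarzian differential equation f‴(z) · f′(z) = (3/2) · (f″(z))² for all z ∈ U. Then f is the restriction to U of a normalized Möbius transformation: there exist a, b, c, d ∈ ℂ with ad − bc = 1 such that cz + d ≠ 0 and f(z) = (az + b)/(cz + d) for all z ∈ U. -/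
/-- A differentiable function on an open preconnected set of `ℂ` whose derivative vanishes
identically is constant. -/
private lemma schwarzian_aux_const_of_deriv_zero {U : Set ℂ} (hU : IsOpen U)
    (hconn : IsPreconnected U) {g : ℂ → ℂ} (hg : DifferentiableOn ℂ g U)
    (hg' : ∀ z ∈ U, deriv g z = 0) {z₀ : ℂ} (h₀ : z₀ ∈ U) : ∀ z ∈ U, g z = g z₀ := by
  have hA : AnalyticOnNhd ℂ g U := hg.analyticOnNhd hU
  obtain ⟨r, hr, hball⟩ := Metric.isOpen_iff.1 hU z₀ h₀
  have hev : g =ᶠ[nhds z₀] fun _ => g z₀ := by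
    have hconst : ∀ z ∈ Metric.ball z₀ r, g z = g z₀ := by
      intro z hz
      refine (convex_ball z₀ r).is_const_of_fderivWithin_eq_zero (hg.mono hball) ?_ hz
        (Metric.mem_ball_self hr)
      intro w hw
      rw [fderivWithin_of_isOpen Metric.isOpen_ball hw]
      ext1
      simp [← toSpanSingleton_deriv, hg' w (hball hw)]
    filter_upwards [Metric.ball_mem_nhds z₀ hr] with z hz using hconst z hz
  intro z hz
  exact hA.eqOn_of_preconnected_of_eventuallyEq analyticOnNhd_const hconn h₀ hev hz

/-- Let `U ⊆ ℂ` be a nonempty open connected set and let `f` be holomorphic on `U` with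
nonvanishing derivative, satisfying the Schwarzian differential equation
`f‴ · f′ = (3/2) · (f″)²` on `U`.  Then `f` is the restriction to `U` of a normalized
Möbius transformation. -/
theorem schwarzian_solutions_are_mobius (U : Set ℂ) (hU : IsOpen U) (hne : U.Nonempty)
    (hconn : IsConnected U) (f : ℂ → ℂ) (hf : DifferentiableOn ℂ f U)
    (hf' : ∀ z ∈ U, deriv f z ≠ 0)
    (heq : ∀ z ∈ U,
      deriv (deriv (deriv f)) z * deriv f z = (3 / 2) * (deriv (deriv f) z) ^ 2) :
    ∃ a b c d : ℂ, a * d - b * c = 1 ∧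
      ∀ z ∈ U, c * z + d ≠ 0 ∧ f z = (a * z + b) / (c * z + d) := by
  obtain ⟨z₀, hz₀⟩ := hne
  have hpre : IsPreconnected U := hconn.isPreconnected
  set f1 := deriv f with hf1def
  set f2 := deriv f1 with hf2def
  set f3 := deriv f2 with hf3def
  have hA : AnalyticOnNhd ℂ f U := hf.analyticOnNhd hU
  have hA1 : AnalyticOnNhd ℂ f1 U := hA.deriv
  have hA2 : AnalyticOnNhd ℂ f2 U := hA1.deriv
  -- the function W = f″² / f′³ is constant on U
  set W := fun z => f2 z ^ 2 / f1 z ^ 3 with hWdef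
  have hWdiff : DifferentiableOn ℂ W U :=
    ((hA2.pow 2).div (hA1.pow 3) fun z hz => pow_ne_zero _ (hf' z hz)).differentiableOn
  have hWderiv : ∀ z ∈ U, deriv W z = 0 := by
    intro z hz
    have h1 : DifferentiableAt ℂ f1 z := (hA1 z hz).differentiableAt
    have h2 : DifferentiableAt ℂ f2 z := (hA2 z hz).differentiableAt
    have hne1 : f1 z ≠ 0 := hf' z hz
    rw [hWdef, deriv_fun_div (c := fun x => f2 x ^ 2) (d := fun x => f1 x ^ 3) (h2.pow 2) (h1.pow 3) (pow_ne_zero _ hne1),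
      deriv_fun_pow h2 2, deriv_fun_pow h1 3]
    have hode : f3 z * f1 z = 3 / 2 * f2 z ^ 2 := heq z hz
    rw [div_eq_zero_iff]
    left
    rw [← hf2def, ← hf3def]
    push_cast
    norm_num
    linear_combination (2 * f2 z * f1 z ^ 2) * hode
  have hWconst : ∀ z ∈ U, W z = W z₀ :=
    schwarzian_aux_const_of_deriv_zero hU hpre hWdiff hWderiv hz₀
  by_cases hc : W z₀ = 0
  · -- Case 1: f″ vanishes identically, so f is affine
    have hf2z : ∀ z ∈ U, f2 z = 0 := by
      intro z hz
      have h := hWconst z hz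
      rw [hc, hWdef] at h
      rcases div_eq_zero_iff.1 h with h' | h'
      · exact pow_eq_zero_iff two_ne_zero |>.mp h'
      · exact absurd h' (pow_ne_zero _ (hf' z hz))
    obtain ⟨k, hk, hf1c⟩ : ∃ k, k ≠ 0 ∧ ∀ z ∈ U, f1 z = k :=
      ⟨f1 z₀, hf' z₀ hz₀,
        schwarzian_aux_const_of_deriv_zero hU hpre hA1.differentiableOn hf2z hz₀⟩
    have hGdiff : DifferentiableOn ℂ (fun z => f z - k * z) U :=
      hf.sub ((differentiable_fun_id.const_mul k).differentiableOn)
    have hGderiv : ∀ z ∈ U, deriv (fun z => f z - k * z) z = 0 := by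
      intro z hz
      have hfz : DifferentiableAt ℂ f z := hf.differentiableAt (hU.mem_nhds hz)
      rw [deriv_fun_sub hfz (differentiableAt_fun_id.const_mul k)]
      have h2 : deriv (fun z => k * z) z = k := by
        rw [deriv_const_mul k differentiableAt_fun_id]
        simp
      rw [h2, ← hf1def, hf1c z hz, sub_self]
    obtain ⟨m, hfz⟩ : ∃ m, ∀ z ∈ U, f z = k * z + m := by
      refine ⟨f z₀ - k * z₀, fun z hz => ?_⟩
      have := schwarzian_aux_const_of_deriv_zero hU hpre hGdiff hGderiv hz₀ z hz
      linear_combination this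
    obtain ⟨t, ht⟩ := IsAlgClosed.exists_pow_nat_eq (k := ℂ) k two_pos
    have htne : t ≠ 0 := by
      intro h
      rw [h] at ht
      simp at ht
      exact hk ht.symm
    refine ⟨t, m * t⁻¹, 0, t⁻¹, ?_, ?_⟩
    · field_simp
      simp
    · intro z hz
      constructor
      · simp [htne]
      · rw [hfz z hz, ← ht]
        field_simp
        ring
  · -- Case 2: f″ never vanishes
    have hf2ne : ∀ z ∈ U, f2 z ≠ 0 := by
      intro z hz h0
      apply hc
      rw [← hWconst z hz, hWdef]
      simp [h0]
    -- g = f′/f″ + z/2 is constant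
    set g := fun z => f1 z / f2 z + z / 2 with hgdef
    have hgdiff : DifferentiableOn ℂ g U :=
      ((hA1.div hA2 hf2ne).differentiableOn).add
        ((differentiable_fun_id.div_const 2).differentiableOn)
    have hgderiv : ∀ z ∈ U, deriv g z = 0 := by
      intro z hz
      have h1 : DifferentiableAt ℂ f1 z := (hA1 z hz).differentiableAt
      have h2 : DifferentiableAt ℂ f2 z := (hA2 z hz).differentiableAt
      have hne2 : f2 z ≠ 0 := hf2ne z hz
      have hdiv : DifferentiableAt ℂ (fun z => f1 z / f2 z) z := h1.div h2 hne2
      rw [hgdef, deriv_fun_add hdiv (differentiableAt_fun_id.div_const 2),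
        deriv_fun_div h1 h2 hne2, deriv_div_const, deriv_id'']
      have hode : f3 z * f1 z = 3 / 2 * f2 z ^ 2 := heq z hz
      field_simp
      rw [← hf2def, ← hf3def]
      linear_combination (-2 : ℂ) * hode
    have hgconst : ∀ z ∈ U, g z = g z₀ :=
      schwarzian_aux_const_of_deriv_zero hU hpre hgdiff hgderiv hz₀
    obtain ⟨z₁, hkey⟩ : ∃ z₁, ∀ z ∈ U, (z - z₁) * f2 z = -2 * f1 z := by
      refine ⟨2 * g z₀, fun z hz => ?_⟩
      have h := hgconst z hz
      rw [hgdef] at h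
      simp only at h
      have hne2 : f2 z ≠ 0 := hf2ne z hz
      have h2 : f1 z / f2 z = g z₀ - z / 2 := by linear_combination h
      have h3 : f1 z = (g z₀ - z / 2) * f2 z := by
        rw [← h2, div_mul_cancel₀ _ hne2]
      linear_combination 2 * h3
    have hzne : ∀ z ∈ U, z - z₁ ≠ 0 := by
      intro z hz h0
      have h := hkey z hz
      rw [h0, zero_mul] at h
      exact hf' z hz (by linear_combination h / 2)
    -- F = (z - z₁)² f′ is constant
    have hFdiff : DifferentiableOn ℂ (fun z => (z - z₁) ^ 2 * f1 z) U :=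
      (((differentiable_fun_id.sub_const z₁).pow 2).differentiableOn).mul hA1.differentiableOn
    have hFderiv : ∀ z ∈ U, deriv (fun z => (z - z₁) ^ 2 * f1 z) z = 0 := by
      intro z hz
      have h1 : DifferentiableAt ℂ f1 z := (hA1 z hz).differentiableAt
      have hq : DifferentiableAt ℂ (fun z => (z - z₁) ^ 2) z :=
        (differentiableAt_fun_id.sub_const z₁).pow 2
      rw [deriv_fun_mul hq h1]
      have hdq : deriv (fun z => (z - z₁) ^ 2) z = 2 * (z - z₁) := by
        rw [deriv_fun_pow (differentiableAt_fun_id.sub_const z₁) 2]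
        simp [deriv_sub_const]
      rw [hdq, ← hf2def]
      linear_combination (z - z₁) * hkey z hz
    obtain ⟨k, hk, hf1eq⟩ : ∃ k, k ≠ 0 ∧ ∀ z ∈ U, (z - z₁) ^ 2 * f1 z = k := by
      refine ⟨(z₀ - z₁) ^ 2 * f1 z₀,
        mul_ne_zero (pow_ne_zero _ (hzne z₀ hz₀)) (hf' z₀ hz₀), fun z hz => ?_⟩
      exact schwarzian_aux_const_of_deriv_zero hU hpre hFdiff hFderiv hz₀ z hz
    -- G = f + k (z - z₁)⁻¹ is constant
    have hGdiff : DifferentiableOn ℂ (fun z => f z + k * (z - z₁)⁻¹) U := by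
      apply hf.add
      apply DifferentiableOn.const_mul
      intro z hz
      exact ((differentiableAt_fun_id.sub_const z₁).inv (hzne z hz)).differentiableWithinAt
    have hGderiv : ∀ z ∈ U, deriv (fun z => f z + k * (z - z₁)⁻¹) z = 0 := by
      intro z hz
      have hfz : DifferentiableAt ℂ f z := hf.differentiableAt (hU.mem_nhds hz)
      have hinv : DifferentiableAt ℂ (fun z => (z - z₁)⁻¹) z :=
        (differentiableAt_fun_id.sub_const z₁).inv (hzne z hz)
      rw [deriv_fun_add hfz (hinv.const_mul k), deriv_const_mul k hinv,
        deriv_fun_inv'' (differentiableAt_fun_id.sub_const z₁) (hzne z hz)]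
      simp only [deriv_sub_const, deriv_id'']
      rw [← hf1def]
      have h := hf1eq z hz
      have hzz : z - z₁ ≠ 0 := hzne z hz
      field_simp
      linear_combination h
    obtain ⟨m, hfeq⟩ : ∃ m, ∀ z ∈ U, f z = m - k * (z - z₁)⁻¹ := by
      refine ⟨f z₀ + k * (z₀ - z₁)⁻¹, fun z hz => ?_⟩
      have := schwarzian_aux_const_of_deriv_zero hU hpre hGdiff hGderiv hz₀ z hz
      linear_combination this
    obtain ⟨t, ht⟩ := IsAlgClosed.exists_pow_nat_eq (k := ℂ) k two_pos
    have htne : t ≠ 0 := by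
      intro h
      rw [h] at ht
      simp at ht
      exact hk ht.symm
    refine ⟨m / t, (-(m * z₁) - k) / t, 1 / t, -z₁ / t, ?_, ?_⟩
    · field_simp
      linear_combination (-1 : ℂ) * ht
    · intro z hz
      have hzz : z - z₁ ≠ 0 := hzne z hz
      have hden : (1 / t) * z + -z₁ / t = (z - z₁) / t := by ring
      constructor
      · rw [hden]
        exact div_ne_zero hzz htne
      · rw [hfeq z hz, hden]
        field_simp
        ring
end
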